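/- Let r, s ≥ 1, α ∈ k((t^{1/r})) a formal Laurent series of order −s in t^{1/r}, and suppose t^{1/r}, expressed via the equation ∂_t(α(t^{1/r})) + t' = 0 as a formal Laurent series in 1/t'^{1/(r+s)} of order 1, is substituted into β := α(t^{1/r}) + t·t'. Then ∂_{t'}(β) = t, and β is a formal Laurent series in 1/t'^{1/(r+s)} of order −s. -/

import Mathlib

/-- The Euler operator `Z'∂_{Z'}` on formal Laurent series in the variable `Z'`. -/
noncomputable def tdt {k : Type*} [Field k] (f : LaurentSeries k) : LaurentSeries k :=
  { coeff := fun n => (n : k) * f.coeff n,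
    isPWO_support' := f.isPWO_support'.mono (by
      intro n hn
      simp only [Function.mem_support, ne_eq] at hn ⊢
      exact fun h => hn (by rw [h, mul_zero])) }

@[simp] lemma tdt_coeff {k : Type*} [Field k] (f : LaurentSeries k) (n : ℤ) :
    (tdt f).coeff n = (n : k) * f.coeff n := rfl

lemma tdt_add {k : Type*} [Field k] (f g : LaurentSeries k) :
    tdt (f + g) = tdt f + tdt g := by
  ext n
  simp [tdt, mul_add]

lemma tdt_support {k : Type*} [Field k] (f : LaurentSeries k) :
    (tdt f).support ⊆ f.support := by
  intro n hn
  simp only [HahnSeries.mem_support, tdt_coeff, ne_eq] at hn ⊢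
  exact fun h => hn (by rw [h, mul_zero])

lemma tdt_mul {k : Type*} [Field k] (f g : LaurentSeries k) :
    tdt (f * g) = tdt f * g + f * tdt g := by
  ext n
  rw [HahnSeries.coeff_add, tdt_coeff, HahnSeries.coeff_mul,
    HahnSeries.coeff_mul_left' f.isPWO_support (tdt_support f),
    HahnSeries.coeff_mul_right' g.isPWO_support (tdt_support g),
    ← Finset.sum_add_distrib, Finset.mul_sum]
  refine Finset.sum_congr rfl ?_
  rintro ⟨i, j⟩ hij
  rw [Finset.mem_addAntidiagonal] at hij
  simp only [tdt_coeff]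
  have : ((n : ℤ) : k) = (i : k) + (j : k) := by
    rw [← hij.2.2]; push_cast; ring
  rw [this]; ring

lemma tdt_single {k : Type*} [Field k] (a : ℤ) (x : k) :
    tdt (HahnSeries.single a x : LaurentSeries k) = HahnSeries.single a ((a : k) * x) := by
  ext n
  rw [tdt_coeff]
  by_cases h : n = a
  · subst h; simp
  · simp [HahnSeries.coeff_single, h]

/-- All series are written in the variable `Z' = 1/t'^{1/(r+s)}`, so that
`t' = Z'^{-(r+s)}` and `Z'∂_{Z'}(t') = -(r+s)·t'`.  The unknown `t^{1/r}` is a Laurent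
series `T` in `Z'` of order `1`, `t = T^r`, and `α` (a Laurent series of order `−s` in
`t^{1/r}`, with coefficients `c m`) becomes after substitution the series
`A = α(T) = ∑_m c_m T^m` (encoded by coefficientwise convergence of the partial sums).
The first equation `∂_t(α(t^{1/r})) + t' = 0`, multiplied by `dt/dZ'` and by `Z'`,
reads `Z'∂_{Z'}A + t'·Z'∂_{Z'}(T^r) = 0`.  Then `β := α(t^{1/r}) + t·t' = A + T^r·t'`
satisfies `∂_{t'}β = t`, i.e. `Z'∂_{Z'}β = T^r·Z'∂_{Z'}(t') = -(r+s)·t'·T^r`, and `β` is a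
Laurent series of order `−s` in `Z'`. -/
theorem beta_has_order_neg_s
    {k : Type*} [Field k] [CharZero k] [IsAlgClosed k] (r s : ℕ) (hr : 1 ≤ r) (hs : 1 ≤ s)
    (c : ℤ → k) (hc1 : ∀ m : ℤ, m < -(s : ℤ) → c m = 0) (hc2 : c (-(s : ℤ)) ≠ 0)
    (T : LaurentSeries k) (hT : T.order = 1)
    (A : LaurentSeries k)
    -- `A` is the substitution `α(T) = ∑_m c_m T^m`: every truncation of `A` is realized by a
    -- sufficiently long partial sum `∑_{i<M} c_{i-s}·T^{i-s}`
    (hA : ∀ N : ℤ, ∃ M : ℕ, ∀ j : ℤ, j < N →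
      (A - ∑ i ∈ Finset.range M,
        HahnSeries.C (c ((i : ℤ) - (s : ℤ))) * T ^ ((i : ℤ) - (s : ℤ))).coeff j = 0)
    -- the first equation `∂_t(α(t^{1/r})) + t' = 0`, multiplied by `dt/dZ'·Z'`
    (heq : tdt A + (HahnSeries.single (-(r + s : ℤ)) (1 : k) : LaurentSeries k) * tdt (T ^ r) = 0) :
    -- `∂_{t'}(β) = t`, in the form `Z'∂_{Z'}β = T^r · Z'∂_{Z'}(t') = -(r+s)·t'·T^r`
    (tdt (A + T ^ r * (HahnSeries.single (-(r + s : ℤ)) (1 : k) : LaurentSeries k)) =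
      HahnSeries.C (-((r : k) + (s : k))) *
        ((HahnSeries.single (-(r + s : ℤ)) (1 : k) : LaurentSeries k) * T ^ r)) ∧
    -- `β` has order `−s` as a Laurent series in `Z'`
    ((A + T ^ r * (HahnSeries.single (-(r + s : ℤ)) (1 : k) : LaurentSeries k)).order
      = -(s : ℤ)) := by
  set S : LaurentSeries k := HahnSeries.single (-(r + s : ℤ)) (1 : k) with hS
  have h1 : tdt A = -(S * tdt (T ^ r)) := eq_neg_of_add_eq_zero_left heq
  have hsingle : tdt S = HahnSeries.C (-((r : k) + (s : k))) * S := by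
    rw [hS, tdt_single, HahnSeries.C, RingHom.coe_mk, MonoidHom.coe_mk, OneHom.coe_mk,
      HahnSeries.single_mul_single, zero_add]
    congr 1 <;> push_cast <;> ring
  constructor
  · rw [tdt_add, tdt_mul, h1, hsingle]
    ring
  · -- order computation
    have hT0 : T ≠ 0 := by
      intro h; rw [h, HahnSeries.order_zero] at hT; exact one_ne_zero hT.symm
    have hTr0 : T ^ r ≠ 0 := pow_ne_zero _ hT0
    have horderTr : (T ^ r).order = (r : ℤ) := by
      rw [HahnSeries.order_pow, hT, nsmul_eq_mul, mul_one]
    have hS0 : S ≠ 0 := HahnSeries.single_ne_zero one_ne_zero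
    have hBorder : (T ^ r * S).order = -(s : ℤ) := by
      rw [HahnSeries.order_mul hTr0 hS0, horderTr, hS, HahnSeries.order_single one_ne_zero]
      push_cast; ring
    have hB0 : T ^ r * S ≠ 0 := mul_ne_zero hTr0 hS0
    set L : k := (T ^ r).coeff (r : ℤ) with hL
    have hL0 : L ≠ 0 := by
      rw [hL, ← horderTr]; exact mt HahnSeries.coeff_order_eq_zero.mp hTr0
    have hBcoeff : (T ^ r * S).coeff (-(s : ℤ)) = L := by
      have key : ((r : ℤ) + (-(r + s : ℤ))) = -(s : ℤ) := by ring
      rw [← key, hS, HahnSeries.coeff_mul_single_add, mul_one, hL]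
    -- coefficientwise consequence of heq
    have hco : ∀ j : ℤ, (j : k) * A.coeff j
        + ((j + (r + s : ℤ) : ℤ) : k) * (T ^ r).coeff (j + (r + s : ℤ)) = 0 := by
      intro j
      have h2 := congrArg (fun f : LaurentSeries k => f.coeff j) heq
      simp only [HahnSeries.coeff_add, HahnSeries.coeff_zero] at h2
      have key : ((j + (r + s : ℤ)) + (-(r + s : ℤ))) = j := by ring
      rw [← key, hS, HahnSeries.coeff_single_mul_add, one_mul, key, tdt_coeff, tdt_coeff] at h2
      exact h2
    have hAvanish : ∀ j : ℤ, j < -(s : ℤ) → A.coeff j = 0 := by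
      intro j hj
      have h2 := hco j
      have hjr : j + (r + s : ℤ) < (T ^ r).order := by rw [horderTr]; omega
      rw [HahnSeries.coeff_eq_zero_of_lt_order hjr, mul_zero, add_zero] at h2
      have hjne : (j : k) ≠ 0 := by
        rw [Int.cast_ne_zero]; omega
      exact (mul_eq_zero.mp h2).resolve_left hjne
    have hAlead : (s : k) * A.coeff (-(s : ℤ)) = (r : k) * L := by
      have h2 := hco (-(s : ℤ))
      have key : (-(s : ℤ) + (r + s : ℤ)) = (r : ℤ) := by ring
      rw [key] at h2
      rw [hL]
      push_cast at h2 ⊢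
      linear_combination -h2
    have hcoeff : (A + T ^ r * S).coeff (-(s : ℤ)) ≠ 0 := by
      rw [HahnSeries.coeff_add, hBcoeff]
      intro h
      have hsne : (s : k) ≠ 0 := Nat.cast_ne_zero.mpr (by omega)
      have h3 : (s : k) * A.coeff (-(s : ℤ)) + (s : k) * L = 0 := by
        rw [← mul_add, h, mul_zero]
      have hrs : ((r : k) + (s : k)) * L = 0 := by linear_combination h3 - hAlead
      have : ((r : k) + (s : k)) ≠ 0 := by
        have : ((r + s : ℕ) : k) ≠ 0 := Nat.cast_ne_zero.mpr (by omega)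
        push_cast at this; exact this
      exact hL0 ((mul_eq_zero.mp hrs).resolve_left this)
    have hne : A + T ^ r * S ≠ 0 := HahnSeries.ne_zero_of_coeff_ne_zero hcoeff
    refine le_antisymm (HahnSeries.order_le_of_coeff_ne_zero hcoeff) ?_
    by_contra h
    push_neg at h
    have hvan : (A + T ^ r * S).coeff ((A + T ^ r * S).order) = 0 := by
      rw [HahnSeries.coeff_add, hAvanish _ h,
        HahnSeries.coeff_eq_zero_of_lt_order (by rw [hBorder]; exact h), add_zero]
    exact mt HahnSeries.coeff_order_eq_zero.mp hne hvan
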